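/- Shortest-head-array case split: suppose s,h ⊨ Sorted(Arr(t,t') * Σ) ∧ (Arr(t,t') * Σ) and s,h ⊨ Sorted(Arr(t₀,t₀') * Σ₀) ∧ (Arr(t₀,t₀') * Σ₀). Then s(t) = s(t₀), and exactly one of: (i) s(t') = s(t₀'), and the restriction of h to Dom(h)∖[s(t),s(t')] satisfies both Σ̃ and Σ̃₀; (ii) s(t') < s(t₀'), and the restriction of h to Dom(h)∖[s(t),s(t')] satisfies Σ̃ and (Arr(t'+1,t₀') * Σ₀)~; (iii) s(t₀') < s(t'), symmetrically. -/

import Mathlib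

abbrev Var := ℕ
abbrev Store := Var → ℕ
abbrev Heap := ℕ → Option ℕ

def Dom (h : Heap) : Set ℕ := {n | h n ≠ none}

def hunion (h1 h2 : Heap) : Heap := fun n =>
  match h1 n with
  | some v => some v
  | none => h2 n

def hempty : Heap := fun _ => none

inductive Term
  | var : Var → Term
  | const : ℕ → Term
  | add : Term → Term → Term

def Term.eval (s : Store) : Term → ℕ
  | .var x => s x
  | .const n => n
  | .add t u => t.eval s + u.eval s

def Term.FV : Term → Set Var
  | .var x => {x}
  | .const _ => ∅
  | .add t u => t.FV ∪ u.FV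

inductive Formula
  | eq : Term → Term → Formula
  | and : Formula → Formula → Formula
  | not : Formula → Formula
  | ex : Var → Formula → Formula
  | emp : Formula
  | pto : Term → Term → Formula
  | arr : Term → Term → Formula
  | sep : Formula → Formula → Formula

def sat (s : Store) (h : Heap) : Formula → Prop
  | .eq t u => t.eval s = u.eval s
  | .and f g => sat s h f ∧ sat s h g
  | .not f => ¬ sat s h f
  | .ex x f => ∃ a : ℕ, sat (Function.update s x a) h f
  | .emp => Dom h = ∅
  | .pto t u => Dom h = {t.eval s} ∧ h (t.eval s) = some (u.eval s)
  | .arr t u => t.eval s ≤ u.eval s ∧ Dom h = Set.Icc (t.eval s) (u.eval s)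
  | .sep f g => ∃ h1 h2 : Heap, Dom h1 ∩ Dom h2 = ∅ ∧ h = hunion h1 h2 ∧ sat s h1 f ∧ sat s h2 g

def Formula.FV : Formula → Set Var
  | .eq t u => t.FV ∪ u.FV
  | .and f g => f.FV ∪ g.FV
  | .not f => f.FV
  | .ex x f => f.FV \ {x}
  | .emp => ∅
  | .pto t u => t.FV ∪ u.FV
  | .arr t u => t.FV ∪ u.FV
  | .sep f g => f.FV ∪ g.FV

inductive Atom
  | emp : Atom
  | pto : Term → Term → Atom
  | arr : Term → Term → Atom

abbrev Spatial := List Atom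

def satAtom (s : Store) (h : Heap) : Atom → Prop
  | .emp => Dom h = ∅
  | .pto t u => Dom h = {t.eval s} ∧ h (t.eval s) = some (u.eval s)
  | .arr t u => t.eval s ≤ u.eval s ∧ Dom h = Set.Icc (t.eval s) (u.eval s)

def satSp (s : Store) (h : Heap) : Spatial → Prop
  | [] => Dom h = ∅
  | a :: sg => ∃ h1 h2 : Heap, Dom h1 ∩ Dom h2 = ∅ ∧ h = hunion h1 h2 ∧
      satAtom s h1 a ∧ satSp s h2 sg

def ltSp (s : Store) (v : ℕ) : Spatial → Prop
  | [] => True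
  | .emp :: sg => ltSp s v sg
  | .pto t _ :: _ => v < t.eval s
  | .arr t _ :: _ => v < t.eval s

def sorted' (s : Store) : Spatial → Prop
  | [] => True
  | .emp :: sg => sorted' s sg
  | .pto t _ :: sg => ltSp s (t.eval s) sg ∧ sorted' s sg
  | .arr t u :: sg => t.eval s ≤ u.eval s ∧ ltSp s (u.eval s) sg ∧ sorted' s sg

def sortedSp (s : Store) (sg : Spatial) : Prop := ltSp s 0 sg ∧ sorted' s sg

def SDom (s : Store) : Spatial → Set ℕ
  | [] => ∅
  | .emp :: sg => SDom s sg
  | .pto t _ :: sg => {t.eval s} ∪ SDom s sg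
  | .arr t u :: sg => Set.Icc (t.eval s) (u.eval s) ∪ SDom s sg

/-- remove the addresses in the interval `[a,b]` from the heap `h` -/
def hminus (h : Heap) (a b : ℕ) : Heap := fun n => if a ≤ n ∧ n ≤ b then none else h n

/-! In a sorted heap the head array `[a, b]` is followed only by addresses above `b`,
so `a` is the least address of the heap; the two decompositions therefore start at the same
address, and removing the shorter head array leaves the tail of the other one, `[b + 1, b']`,
in front of its remaining atoms. -/

section Heap

lemma Dom_hunion (h1 h2 : Heap) : Dom (hunion h1 h2) = Dom h1 ∪ Dom h2 := by
  ext n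
  simp only [Dom, hunion, Set.mem_union, Set.mem_ofPred_eq]
  cases hn : h1 n <;> simp

lemma hunion_eq_right_of_Dom_eq_empty {h1 : Heap} (h2 : Heap) (h : Dom h1 = ∅) :
    hunion h1 h2 = h2 := by
  funext n
  have : h1 n = none := by simpa [Dom] using Set.eq_empty_iff_forall_notMem.1 h n
  simp [hunion, this]

lemma Dom_hminus (h : Heap) (a b : ℕ) : Dom (hminus h a b) = Dom h \ Set.Icc a b := by
  ext n
  by_cases hn : a ≤ n ∧ n ≤ b
  · simp [Dom, hminus, hn]
  · simp only [Dom, hminus, hn, if_false, Set.mem_sdiff, Set.mem_Icc, Set.mem_ofPred_eq]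
    tauto

lemma hminus_hunion (h1 h2 : Heap) (a b : ℕ) :
    hminus (hunion h1 h2) a b = hunion (hminus h1 a b) (hminus h2 a b) := by
  funext n
  simp only [hminus, hunion]
  split_ifs <;> rfl

lemma hminus_eq_self {h : Heap} {a b : ℕ} (hb : ∀ n ∈ Dom h, b < n) : hminus h a b = h := by
  funext n
  by_cases hn : n ∈ Dom h
  · exact if_neg fun hab => (hb n hn).not_ge hab.2
  · simp [hminus, show h n = none from not_not.1 hn]

end Heap

section Sorted

variable {s : Store}

lemma ltSp_of_le {v w : ℕ} (hvw : v ≤ w) {sg : Spatial} (hsg : ltSp s w sg) : ltSp s v sg := by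
  induction sg with
  | nil => trivial
  | cons a sg ih =>
    cases a with
    | emp => exact ih hsg
    | pto t _ => exact hvw.trans_lt (show w < t.eval s from hsg)
    | arr t _ => exact hvw.trans_lt (show w < t.eval s from hsg)

lemma lt_of_mem_Dom_of_satSp {sg : Spatial} {h : Heap} {v : ℕ} (hsort : sorted' s sg)
    (hlt : ltSp s v sg) (hsat : satSp s h sg) : ∀ n ∈ Dom h, v < n := by
  induction sg generalizing h v with
  | nil =>
    intro n hn
    simp [show Dom h = ∅ from hsat] at hn
  | cons a sg ih =>
    obtain ⟨h1, h2, -, rfl, ha, hsat⟩ := hsat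
    intro n hn
    rw [Dom_hunion] at hn
    cases a with
    | emp =>
      rcases hn with hn | hn
      · simp [show Dom h1 = ∅ from ha] at hn
      · exact ih hsort hlt hsat n hn
    | pto t _ =>
      have hlt : v < t.eval s := hlt
      rcases hn with hn | hn
      · rw [ha.1, Set.mem_singleton_iff] at hn
        exact hn ▸ hlt
      · exact hlt.trans (ih hsort.2 hsort.1 hsat n hn)
    | arr t u =>
      have hlt : v < t.eval s := hlt
      rcases hn with hn | hn
      · rw [ha.2] at hn
        exact hlt.trans_le hn.1
      · exact (hlt.trans_le hsort.1).trans (ih hsort.2.2 hsort.2.1 hsat n hn)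

lemma sortedSp_of_sorted'_arr_cons {t u : Term} {sg : Spatial}
    (hsort : sorted' s (.arr t u :: sg)) : sortedSp s sg :=
  ⟨ltSp_of_le (Nat.zero_le _) hsort.2.1, hsort.2.2⟩

lemma sortedSp_arr_succ_cons {t u v : Term} {sg : Spatial} (hsort : sorted' s (.arr t u :: sg))
    (hvu : v.eval s < u.eval s) : sortedSp s (.arr (.add v (.const 1)) u :: sg) :=
  ⟨Nat.succ_pos _, hvu, hsort.2.1, hsort.2.2⟩

end Sorted

section HeadArray

variable {s : Store} {h : Heap} {t u : Term} {sg : Spatial}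

lemma exists_hunion_of_satSp_arr_cons (hsort : sorted' s (.arr t u :: sg))
    (hsat : satSp s h (.arr t u :: sg)) :
    ∃ g1 g2 : Heap, h = hunion g1 g2 ∧ Dom g1 = Set.Icc (t.eval s) (u.eval s) ∧
      (∀ n ∈ Dom g2, u.eval s < n) ∧ satSp s g2 sg := by
  obtain ⟨g1, g2, -, rfl, ⟨-, hg1⟩, hg2⟩ := hsat
  exact ⟨g1, g2, rfl, hg1, lt_of_mem_Dom_of_satSp hsort.2.2 hsort.2.1 hg2, hg2⟩

lemma isLeast_Dom_of_satSp_arr_cons (hsort : sorted' s (.arr t u :: sg))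
    (hsat : satSp s h (.arr t u :: sg)) : IsLeast (Dom h) (t.eval s) := by
  obtain ⟨g1, g2, rfl, hg1, hg2, -⟩ := exists_hunion_of_satSp_arr_cons hsort hsat
  rw [Dom_hunion, hg1]
  refine ⟨Or.inl ⟨le_rfl, hsort.1⟩, ?_⟩
  rintro n (hn | hn)
  · exact hn.1
  · exact (hsort.1.trans_lt (hg2 n hn)).le

lemma satSp_hminus_of_satSp_arr_cons (hsort : sorted' s (.arr t u :: sg))
    (hsat : satSp s h (.arr t u :: sg)) : satSp s (hminus h (t.eval s) (u.eval s)) sg := by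
  obtain ⟨g1, g2, rfl, hg1, hg2, hsat⟩ := exists_hunion_of_satSp_arr_cons hsort hsat
  rwa [hminus_hunion, hminus_eq_self hg2, hunion_eq_right_of_Dom_eq_empty]
  rw [Dom_hminus, hg1, Set.sdiff_self]

lemma satSp_hminus_arr_succ_cons {v : Term} (hsort : sorted' s (.arr t u :: sg))
    (hsat : satSp s h (.arr t u :: sg)) (htv : t.eval s ≤ v.eval s) (hvu : v.eval s < u.eval s) :
    satSp s (hminus h (t.eval s) (v.eval s)) (.arr (.add v (.const 1)) u :: sg) := by
  obtain ⟨g1, g2, rfl, hg1, hg2, hsat⟩ := exists_hunion_of_satSp_arr_cons hsort hsat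
  have hdom : Dom (hminus g1 (t.eval s) (v.eval s)) = Set.Icc (v.eval s + 1) (u.eval s) := by
    ext n
    simp only [Dom_hminus, hg1, Set.mem_sdiff, Set.mem_Icc]
    omega
  refine ⟨hminus g1 (t.eval s) (v.eval s), g2, ?_, ?_, ⟨hvu, hdom⟩, hsat⟩
  · rw [Set.eq_empty_iff_forall_notMem]
    rintro n ⟨hn1, hn2⟩
    rw [hdom] at hn1
    exact (hg2 n hn2).not_ge hn1.2
  · rw [hminus_hunion, hminus_eq_self fun n hn => hvu.trans (hg2 n hn)]

end HeadArray

/-- shortest-head-array case split (semantic content of the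
(ArrArr) clause of the translation `P`). -/
theorem stmt15 (s : Store) (h : Heap) (t t' t0 t0' : Term) (sg sg0 : Spatial)
    (h1 : sortedSp s (.arr t t' :: sg) ∧ satSp s h (.arr t t' :: sg))
    (h2 : sortedSp s (.arr t0 t0' :: sg0) ∧ satSp s h (.arr t0 t0' :: sg0)) :
    t.eval s = t0.eval s ∧
    ((t'.eval s = t0'.eval s ∧
        sortedSp s sg ∧ satSp s (hminus h (t.eval s) (t'.eval s)) sg ∧
        sortedSp s sg0 ∧ satSp s (hminus h (t.eval s) (t'.eval s)) sg0) ∨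
     (t'.eval s < t0'.eval s ∧
        sortedSp s sg ∧ satSp s (hminus h (t.eval s) (t'.eval s)) sg ∧
        sortedSp s (.arr (.add t' (.const 1)) t0' :: sg0) ∧
        satSp s (hminus h (t.eval s) (t'.eval s)) (.arr (.add t' (.const 1)) t0' :: sg0)) ∨
     (t0'.eval s < t'.eval s ∧
        sortedSp s (.arr (.add t0' (.const 1)) t' :: sg) ∧
        satSp s (hminus h (t.eval s) (t0'.eval s)) (.arr (.add t0' (.const 1)) t' :: sg) ∧
        sortedSp s sg0 ∧ satSp s (hminus h (t.eval s) (t0'.eval s)) sg0)) := by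
  obtain ⟨⟨-, hsort⟩, hsat⟩ := h1
  obtain ⟨⟨-, hsort0⟩, hsat0⟩ := h2
  have hhead : t.eval s = t0.eval s :=
    (isLeast_Dom_of_satSp_arr_cons hsort hsat).unique
      (isLeast_Dom_of_satSp_arr_cons hsort0 hsat0)
  have hrest := satSp_hminus_of_satSp_arr_cons hsort hsat
  have hrest0 := satSp_hminus_of_satSp_arr_cons hsort0 hsat0
  have hsg := sortedSp_of_sorted'_arr_cons hsort
  have hsg0 := sortedSp_of_sorted'_arr_cons hsort0
  refine ⟨hhead, ?_⟩
  rcases lt_trichotomy (t'.eval s) (t0'.eval s) with hlt | heq | hgt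
  · refine Or.inr (Or.inl ⟨hlt, hsg, hrest, sortedSp_arr_succ_cons hsort0 hlt, ?_⟩)
    rw [hhead]
    exact satSp_hminus_arr_succ_cons hsort0 hsat0 (hhead.symm.trans_le hsort.1) hlt
  · rw [hhead, heq] at hrest ⊢
    exact Or.inl ⟨rfl, hsg, hrest, hsg0, hrest0⟩
  · rw [← hhead] at hrest0
    exact Or.inr (Or.inr ⟨hgt, sortedSp_arr_succ_cons hsort hgt,
      satSp_hminus_arr_succ_cons hsort hsat (hhead.trans_le hsort0.1) hgt, hsg0, hrest0⟩)
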